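/- Let n be a positive integer and let A ∈ M_n(ℂ) be a nonzero matrix such that the Schur map S_A is multiplicative. Then every entry of A is nonzero, and S_A is a bijection of M_n(ℂ); in particular S_A is an algebra automorphism of M_n(ℂ). -/

import Mathlib

/-!
Testing `A ⊙ (B * C) = (A ⊙ B) * (A ⊙ C)` on matrix units `B = E_ik`, `C = E_kj` gives
`A i j = A i k * A k j` for all `i j k`. One nonzero entry then forces every entry to be nonzero,
and `k = i = j` gives `A i i = 1`. So `S_A` is unital, and Schur multiplication by the entrywise
inverse of `A` inverts it.
-/

open Matrix

namespace Matrix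

variable {ι m n α : Type*}

theorem hadamard_single [DecidableEq m] [DecidableEq n] [MulZeroClass α] (A : Matrix m n α)
    (i : m) (j : n) (c : α) : A ⊙ single i j c = single i j (A i j * c) := by
  ext p q
  by_cases h : i = p ∧ j = q
  · obtain ⟨rfl, rfl⟩ := h
    simp
  · simp [h]

theorem apply_eq_mul_of_hadamard_mul [DecidableEq ι] [Fintype ι] [Semiring α] {A : Matrix ι ι α}
    (hmul : ∀ B C : Matrix ι ι α, A ⊙ (B * C) = A ⊙ B * A ⊙ C) (i j k : ι) :
    A i j = A i k * A k j := by
  have h := congr_fun₂ (hmul (single i k 1) (single k j 1)) i j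
  simpa [hadamard_single, single_mul_single_same] using h

theorem apply_ne_zero_of_apply_eq_mul [MulZeroClass α] {A : Matrix ι ι α} (hA : A ≠ 0)
    (hA_mul : ∀ i j k, A i j = A i k * A k j) (i j : ι) : A i j ≠ 0 := by
  obtain ⟨p, q, hpq⟩ : ∃ p q, A p q ≠ 0 := by
    by_contra! h
    exact hA (ext h)
  intro hij
  apply hpq
  rw [hA_mul p q i, hA_mul i q j, hij, zero_mul, mul_zero]

theorem hadamard_bijective_of_apply_ne_zero [GroupWithZero α] {A : Matrix m n α}
    (hA : ∀ i j, A i j ≠ 0) : Function.Bijective (A ⊙ ·) := by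
  refine Function.bijective_iff_has_inverse.mpr ⟨(A.map (·⁻¹) ⊙ ·), fun B => ?_, fun B => ?_⟩ <;>
    ext i j <;> simp [hA i j]

def hadamardAlgHom {R : Type*} [DecidableEq ι] [Fintype ι] [CommSemiring R] (A : Matrix ι ι R)
    (hmul : ∀ B C : Matrix ι ι R, A ⊙ (B * C) = A ⊙ B * A ⊙ C) (hdiag : ∀ i, A i i = 1) :
    Matrix ι ι R →ₐ[R] Matrix ι ι R :=
  AlgHom.ofLinearMap
    { toFun := (A ⊙ ·)
      map_add' := fun B C => hadamard_add A B C
      map_smul' := fun r B => hadamard_smul A B r }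
    (hadamard_one_eq_one_iff.mpr (funext hdiag))
    hmul

end Matrix

theorem schur_multiplicative_bijective_automorphism_general (n : ℕ)
    (A : Matrix (Fin n) (Fin n) ℂ) (hA : A ≠ 0)
    (hmul : ∀ B C : Matrix (Fin n) (Fin n) ℂ,
      Matrix.hadamard A (B * C) = Matrix.hadamard A B * Matrix.hadamard A C) :
    (∀ i j, A i j ≠ 0) ∧
      Function.Bijective (fun B : Matrix (Fin n) (Fin n) ℂ => Matrix.hadamard A B) ∧
      ∃ e : Matrix (Fin n) (Fin n) ℂ ≃ₐ[ℂ] Matrix (Fin n) (Fin n) ℂ,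
        ∀ B, e B = Matrix.hadamard A B := by
  have hA_mul := apply_eq_mul_of_hadamard_mul hmul
  have hne := apply_ne_zero_of_apply_eq_mul hA hA_mul
  have hdiag : ∀ i, A i i = 1 := fun i => (mul_eq_left₀ (hne i i)).mp (hA_mul i i i).symm
  have hbij := hadamard_bijective_of_apply_ne_zero hne
  exact ⟨hne, hbij, AlgEquiv.ofBijective (hadamardAlgHom A hmul hdiag) hbij, fun _ => rfl⟩

theorem schur_multiplicative_bijective_automorphism (n : ℕ) (hn : 0 < n)
    (A : Matrix (Fin n) (Fin n) ℂ) (hA : A ≠ 0)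
    (hmul : ∀ B C : Matrix (Fin n) (Fin n) ℂ,
      Matrix.hadamard A (B * C) = Matrix.hadamard A B * Matrix.hadamard A C) :
    (∀ i j, A i j ≠ 0) ∧
      Function.Bijective (fun B : Matrix (Fin n) (Fin n) ℂ => Matrix.hadamard A B) ∧
      ∃ e : Matrix (Fin n) (Fin n) ℂ ≃ₐ[ℂ] Matrix (Fin n) (Fin n) ℂ,
        ∀ B, e B = Matrix.hadamard A B :=
  schur_multiplicative_bijective_automorphism_general n A hA hmul
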